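/- If a connected graph G is clique convergent, then its universal triangular cover G̃ is clique convergent. -/

import Mathlib

open SimpleGraph

/-- A maximal clique: a clique not properly contained in any other clique. -/
def IsMaxClique {V : Type*} (G : SimpleGraph V) (s : Set V) : Prop :=
  G.IsClique s ∧ ∀ t : Set V, G.IsClique t → s ⊆ t → t = s

/-- Vertices of the clique graph: the (maximal) cliques of `G`. -/
abbrev CliqueVert {V : Type*} (G : SimpleGraph V) := {s : Set V // IsMaxClique G s}

/-- The clique graph `kG`: cliques of `G`, two distinct cliques adjacent iff they intersect. -/
def cliqueGraph {V : Type*} (G : SimpleGraph V) : SimpleGraph (CliqueVert G) where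
  Adj Q R := Q ≠ R ∧ (Q.1 ∩ R.1).Nonempty
  symm := by
    constructor
    rintro Q R ⟨hne, x, hx1, hx2⟩
    exact ⟨hne.symm, x, hx2, hx1⟩
  loopless := by constructor; rintro Q ⟨hne, -⟩; exact hne rfl

/-- The closed neighbourhood of a vertex. -/
def closedNbhd {V : Type*} (G : SimpleGraph V) (v : V) : Set V := insert v (G.neighborSet v)

/-- A triangular covering map: a graph homomorphism between connected graphs whose
restriction to each closed neighbourhood is an isomorphism onto the closed
neighbourhood of the image vertex. -/
structure IsTriangularCover {V' V : Type*} {G' : SimpleGraph V'} {G : SimpleGraph V}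
    (p : G' →g G) : Prop where
  connDom : G'.Connected
  connCod : G.Connected
  injOn : ∀ v : V', Set.InjOn p (closedNbhd G' v)
  surjOn : ∀ v : V', Set.SurjOn p (closedNbhd G' v) (closedNbhd G (p v))
  reflectAdj : ∀ v x y : V', x ∈ closedNbhd G' v → y ∈ closedNbhd G' v →
    G.Adj (p x) (p y) → G'.Adj x y

/-- Elementary moves on walks (recorded as lists of vertices): triangle
removal/insertion and dead end removal/insertion. -/
inductive ElemMove {V : Type*} (G : SimpleGraph V) : List V → List V → Prop
  | triRemove (l₁ l₂ : List V) (a b c : V) (h₁ : G.Adj a b) (h₂ : G.Adj b c) (h₃ : G.Adj a c) :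
      ElemMove G (l₁ ++ a :: b :: c :: l₂) (l₁ ++ a :: c :: l₂)
  | triInsert (l₁ l₂ : List V) (a b c : V) (h₁ : G.Adj a b) (h₂ : G.Adj b c) (h₃ : G.Adj a c) :
      ElemMove G (l₁ ++ a :: c :: l₂) (l₁ ++ a :: b :: c :: l₂)
  | deadEndRemove (l₁ l₂ : List V) (a b : V) (h : G.Adj a b) :
      ElemMove G (l₁ ++ a :: b :: a :: l₂) (l₁ ++ a :: l₂)
  | deadEndInsert (l₁ l₂ : List V) (a b : V) (h : G.Adj a b) :
      ElemMove G (l₁ ++ a :: l₂) (l₁ ++ a :: b :: a :: l₂)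

/-- Two walks are homotopic if one can be transformed into the other by a finite
sequence of elementary moves. -/
def Homotopic {V : Type*} (G : SimpleGraph V) : List V → List V → Prop :=
  Relation.ReflTransGen (ElemMove G)

/-- A graph is triangularly simply connected if it is connected and every closed walk
is homotopic to a trivial walk. -/
def TriSimplyConnected {V : Type*} (G : SimpleGraph V) : Prop :=
  G.Connected ∧ ∀ (v : V) (l : List V), (v :: l).Chain' G.Adj →
    (v :: l).getLast (List.cons_ne_nil v l) = v → Homotopic G (v :: l) [v]

universe u

/-- A bundled graph, so that the clique graph operator can be iterated. -/
structure BGraph : Type (u + 1) where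
  carrier : Type u
  graph : SimpleGraph carrier

/-- The clique graph operator on bundled graphs. -/
def kStep : BGraph.{u} → BGraph.{u} := fun B => ⟨CliqueVert B.graph, cliqueGraph B.graph⟩

/-- A graph is clique convergent if two distinct iterated clique graphs are isomorphic. -/
def CliqueConvergent {V : Type u} (G : SimpleGraph V) : Prop :=
  ∃ n m : ℕ, n ≠ m ∧ Nonempty ((kStep^[n] ⟨V, G⟩).graph ≃g (kStep^[m] ⟨V, G⟩).graph)

/-!
A triangular cover `p : G' → G` induces a triangular cover `kG' → kG`: near a fixed clique,
`p` matches the maximal cliques of `G'` with those of `G`. The clique operator also preserves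
triangular simple connectivity: a closed walk of cliques lies over a closed walk of `G`, each
elementary move contracting the latter is matched by a homotopy of the former, and what remains
is a walk of cliques through one common vertex, which contracts like a cone. Hence `kⁿG'` is the
universal triangular cover of `kⁿG` for all `n`. Since universal covers are unique (homotopy
lifting gives inverse lifts of each through the other), `kⁿG ≅ kᵐG` yields `kⁿG' ≅ kᵐG'`.
-/

section Cliques

variable {V : Type*} {G : SimpleGraph V}

lemma self_mem_closedNbhd (v : V) : v ∈ closedNbhd G v := Set.mem_insert v _

lemma mem_closedNbhd_of_adj {v w : V} (h : G.Adj v w) : w ∈ closedNbhd G v := Or.inr h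

lemma mem_closedNbhd_iff {v w : V} : w ∈ closedNbhd G v ↔ w = v ∨ G.Adj v w := Iff.rfl

lemma SimpleGraph.IsClique.subset_closedNbhd {s : Set V} (hs : G.IsClique s) {v : V}
    (hv : v ∈ s) : s ⊆ closedNbhd G v := fun x hx => by
  rcases eq_or_ne x v with rfl | h
  · exact self_mem_closedNbhd x
  · exact mem_closedNbhd_of_adj (hs hv hx h.symm)

lemma SimpleGraph.IsClique.image {W : Type*} {H : SimpleGraph W} {s : Set V} (hs : G.IsClique s)
    (f : G →g H) : H.IsClique (f '' s) := by
  rintro _ ⟨x, hx, rfl⟩ _ ⟨y, hy, rfl⟩ hne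
  exact f.map_rel (hs hx hy fun h => hne (h ▸ rfl))

lemma IsMaxClique.nonempty [Nonempty V] {s : Set V} (hs : IsMaxClique G s) : s.Nonempty := by
  obtain ⟨v⟩ := ‹Nonempty V›
  by_contra h
  rw [Set.not_nonempty_iff_eq_empty] at h
  subst h
  exact Set.singleton_ne_empty v (hs.2 {v} (G.isClique_singleton v) (Set.empty_subset _))

lemma exists_cliqueVert_superset {s : Set V} (hs : G.IsClique s) :
    ∃ Q : CliqueVert G, s ⊆ Q.1 := by
  obtain ⟨m, hsm, hm⟩ := zorn_subset_nonempty {t : Set V | G.IsClique t}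
    (fun c hc hchain _ => ⟨⋃₀ c, (isClique_sUnion hchain.directedOn).2 hc,
      fun _ => Set.subset_sUnion_of_mem⟩) s hs
  exact ⟨⟨m, hm.1, fun t ht hmt => (hm.2 ht hmt).antisymm hmt⟩, hsm⟩

lemma exists_cliqueVert_mem_mem {x y : V} (h : G.Adj x y) :
    ∃ Q : CliqueVert G, x ∈ Q.1 ∧ y ∈ Q.1 := by
  obtain ⟨Q, hQ⟩ := exists_cliqueVert_superset (G.isClique_pair.mpr fun _ => h)
  exact ⟨Q, hQ (by simp), hQ (by simp)⟩

lemma exists_cliqueVert_mem_mem_mem {x y z : V} (hxy : G.Adj x y) (hyz : G.Adj y z)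
    (hxz : G.Adj x z) : ∃ Q : CliqueVert G, x ∈ Q.1 ∧ y ∈ Q.1 ∧ z ∈ Q.1 := by
  have : G.IsClique {x, y, z} := by simp [isClique_insert, hxy, hyz, hxz]
  obtain ⟨Q, hQ⟩ := exists_cliqueVert_superset this
  exact ⟨Q, hQ (by simp), hQ (by simp), hQ (by simp)⟩

lemma cliqueGraph_eq_or_adj_of_mem {Q R : CliqueVert G} {x : V} (hQ : x ∈ Q.1) (hR : x ∈ R.1) :
    Q = R ∨ (cliqueGraph G).Adj Q R :=
  or_iff_not_imp_left.mpr fun h => ⟨h, x, hQ, hR⟩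

lemma cliqueGraph_reachable_of_mem {Q R : CliqueVert G} {x : V} (hQ : x ∈ Q.1) (hR : x ∈ R.1) :
    (cliqueGraph G).Reachable Q R :=
  (cliqueGraph_eq_or_adj_of_mem hQ hR).elim (fun h => h ▸ .rfl) Adj.reachable

lemma mem_closedNbhd_cliqueGraph [Nonempty V] {Q R : CliqueVert G} :
    R ∈ closedNbhd (cliqueGraph G) Q ↔ (Q.1 ∩ R.1).Nonempty := by
  refine ⟨?_, fun ⟨x, hQ, hR⟩ => ?_⟩
  · rintro (rfl | h)
    · obtain ⟨x, hx⟩ := R.2.nonempty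
      exact ⟨x, hx, hx⟩
    · exact h.2
  · rcases cliqueGraph_eq_or_adj_of_mem hQ hR with rfl | h
    · exact self_mem_closedNbhd Q
    · exact mem_closedNbhd_of_adj h

theorem cliqueGraph_connected (hG : G.Connected) : (cliqueGraph G).Connected := by
  have : Nonempty V := hG.nonempty
  choose C hC using fun x : V => exists_cliqueVert_superset (G.isClique_singleton x)
  have hCx (x : V) : x ∈ (C x).1 := hC x rfl
  have hCadj (x y : V) (h : G.Adj x y) : (cliqueGraph G).Reachable (C x) (C y) := by
    obtain ⟨Q, hxQ, hyQ⟩ := exists_cliqueVert_mem_mem h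
    exact (cliqueGraph_reachable_of_mem (hCx x) hxQ).trans
      (cliqueGraph_reachable_of_mem hyQ (hCx y))
  refine (connected_iff _).mpr ⟨fun Q R => ?_, ⟨C (Classical.arbitrary V)⟩⟩
  obtain ⟨x, hx⟩ := Q.2.nonempty
  obtain ⟨y, hy⟩ := R.2.nonempty
  have hCxy : (cliqueGraph G).Reachable (C x) (C y) := by
    simp only [reachable_iff_reflTransGen] at hCadj ⊢
    exact Relation.ReflTransGen.lift' C hCadj _ _ ((reachable_iff_reflTransGen _ _).mp
      (hG.preconnected x y))
  exact ((cliqueGraph_reachable_of_mem hx (hCx x)).trans hCxy).trans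
    (cliqueGraph_reachable_of_mem (hCx y) hy)

end Cliques

section Homotopy

variable {V W : Type*} {G : SimpleGraph V} {H : SimpleGraph W}

namespace ElemMove

lemma symm {l l' : List V} : ElemMove G l l' → ElemMove G l' l
  | triRemove l₁ l₂ a b c h₁ h₂ h₃ => triInsert l₁ l₂ a b c h₁ h₂ h₃
  | triInsert l₁ l₂ a b c h₁ h₂ h₃ => triRemove l₁ l₂ a b c h₁ h₂ h₃
  | deadEndRemove l₁ l₂ a b h => deadEndInsert l₁ l₂ a b h
  | deadEndInsert l₁ l₂ a b h => deadEndRemove l₁ l₂ a b h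

lemma append {l l' : List V} (h : ElemMove G l l') (x y : List V) :
    ElemMove G (x ++ l ++ y) (x ++ l' ++ y) := by
  cases h with
  | triRemove l₁ l₂ a b c h₁ h₂ h₃ => simpa using triRemove (x ++ l₁) (l₂ ++ y) a b c h₁ h₂ h₃
  | triInsert l₁ l₂ a b c h₁ h₂ h₃ => simpa using triInsert (x ++ l₁) (l₂ ++ y) a b c h₁ h₂ h₃
  | deadEndRemove l₁ l₂ a b h => simpa using deadEndRemove (x ++ l₁) (l₂ ++ y) a b h
  | deadEndInsert l₁ l₂ a b h => simpa using deadEndInsert (x ++ l₁) (l₂ ++ y) a b h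

lemma map (f : G →g H) {l l' : List V} : ElemMove G l l' → ElemMove H (l.map f) (l'.map f)
  | triRemove l₁ l₂ a b c h₁ h₂ h₃ => by
    simpa using triRemove (l₁.map f) (l₂.map f) _ _ _ (f.map_rel h₁) (f.map_rel h₂) (f.map_rel h₃)
  | triInsert l₁ l₂ a b c h₁ h₂ h₃ => by
    simpa using triInsert (l₁.map f) (l₂.map f) _ _ _ (f.map_rel h₁) (f.map_rel h₂) (f.map_rel h₃)
  | deadEndRemove l₁ l₂ a b h => by
    simpa using deadEndRemove (l₁.map f) (l₂.map f) _ _ (f.map_rel h)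
  | deadEndInsert l₁ l₂ a b h => by
    simpa using deadEndInsert (l₁.map f) (l₂.map f) _ _ (f.map_rel h)

lemma head?_eq {l l' : List V} (h : ElemMove G l l') : l.head? = l'.head? := by
  cases h <;> simp [List.head?_append]

lemma getLast?_eq {l l' : List V} (h : ElemMove G l l') : l.getLast? = l'.getLast? := by
  cases h <;> simp [List.getLast?_append, List.getLast?_cons_cons]

lemma isChain {l l' : List V} (h : ElemMove G l l') (hl : l.IsChain G.Adj) :
    l'.IsChain G.Adj := by
  cases h <;> simp_all [List.isChain_append, List.isChain_cons_cons, G.adj_comm]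

end ElemMove

namespace Homotopic

lemma refl (l : List V) : Homotopic G l l := Relation.ReflTransGen.refl

lemma of_elemMove {l l' : List V} (h : ElemMove G l l') : Homotopic G l l' :=
  Relation.ReflTransGen.single h

lemma trans {l₁ l₂ l₃ : List V} (h : Homotopic G l₁ l₂) (h' : Homotopic G l₂ l₃) :
    Homotopic G l₁ l₃ :=
  Relation.ReflTransGen.trans h h'

instance : Trans (Homotopic G) (Homotopic G) (Homotopic G) := ⟨trans⟩

lemma symm {l l' : List V} (h : Homotopic G l l') : Homotopic G l' l :=
  haveI : Std.Symm (ElemMove G) := ⟨fun _ _ => ElemMove.symm⟩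
  Std.Symm.symm (r := Relation.ReflTransGen (ElemMove G)) _ _ h

lemma append {l l' : List V} (h : Homotopic G l l') (x y : List V) :
    Homotopic G (x ++ l ++ y) (x ++ l' ++ y) :=
  Relation.ReflTransGen.lift (fun m => x ++ m ++ y) (fun _ _ hm => hm.append x y) _ _ h

lemma map (f : G →g H) {l l' : List V} (h : Homotopic G l l') :
    Homotopic H (l.map f) (l'.map f) :=
  Relation.ReflTransGen.lift (List.map f) (fun _ _ => ElemMove.map f) _ _ h

lemma head?_eq {l l' : List V} (h : Homotopic G l l') : l.head? = l'.head? := by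
  induction h with
  | refl => rfl
  | tail _ hm ih => exact ih.trans hm.head?_eq

lemma getLast?_eq {l l' : List V} (h : Homotopic G l l') : l.getLast? = l'.getLast? := by
  induction h with
  | refl => rfl
  | tail _ hm ih => exact ih.trans hm.getLast?_eq

lemma isChain {l l' : List V} (h : Homotopic G l l') (hl : l.IsChain G.Adj) :
    l'.IsChain G.Adj := by
  induction h with
  | refl => exact hl
  | tail _ hm ih => exact hm.isChain ih

end Homotopic

end Homotopy

section SimplyConnected

variable {V : Type*} {G : SimpleGraph V}

lemma homotopic_append_dropLast_reverse :
    ∀ {a : V} {l : List V}, (a :: l).IsChain G.Adj →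
      Homotopic G (a :: l ++ (a :: l).dropLast.reverse) [a]
  | a, [], _ => Homotopic.refl _
  | a, b :: m, hc => calc
      a :: b :: m ++ (a :: b :: m).dropLast.reverse
          = [a] ++ (b :: m ++ (b :: m).dropLast.reverse) ++ [a] := by simp
      Homotopic G _ ([a] ++ [b] ++ [a]) :=
          (homotopic_append_dropLast_reverse hc.tail).append [a] [a]
      Homotopic G _ [a] := .of_elemMove <| by
          simpa using ElemMove.deadEndRemove [] [] a b (List.isChain_cons_cons.mp hc).1

namespace TriSimplyConnected

lemma homotopic_singleton (hsc : TriSimplyConnected G) {v : V} {l : List V}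
    (hc : (v :: l).IsChain G.Adj) (hl : (v :: l).getLast? = some v) :
    Homotopic G (v :: l) [v] :=
  hsc.2 v l hc (by simpa [List.getLast?_eq_some_getLast (List.cons_ne_nil v l)] using hl)

theorem homotopic_of_getLast?_eq (hsc : TriSimplyConnected G) {a : V} {l l' : List V}
    (hc : (a :: l).IsChain G.Adj) (hc' : (a :: l').IsChain G.Adj)
    (he : (a :: l).getLast? = (a :: l').getLast?) : Homotopic G (a :: l) (a :: l') := by
  obtain ⟨z, hz⟩ := Option.isSome_iff_exists.mp (by simp : (a :: l).getLast?.isSome)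
  obtain ⟨u, hu⟩ := List.getLast?_eq_some_iff.mp hz
  obtain ⟨t, ht⟩ := List.head?_eq_some_iff.mp (by rw [List.head?_reverse, ← he, hz] :
    (a :: l').reverse.head? = some z)
  have hrev : (z :: t).IsChain G.Adj :=
    ht ▸ List.isChain_reverse.mpr (hc'.imp fun _ _ h => h.symm)
  have hloop : Homotopic G (u ++ z :: t) [a] := by
    have e : u ++ z :: t = a :: (l ++ t) := by simp [← List.cons_append, hu]
    rw [e]
    refine hsc.homotopic_singleton ?_ ?_ <;> rw [← e]
    · have := (hu ▸ hc).append_overlap (l₃ := t) (by simpa using hrev) (List.cons_ne_nil _ _)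
      rwa [List.append_assoc, List.singleton_append] at this
    · simpa [List.getLast?_append] using congrArg List.getLast? ht.symm
  calc a :: l = u ++ [z] ++ [] := by simp [hu]
    Homotopic G _ (u ++ (z :: t ++ (z :: t).dropLast.reverse) ++ []) :=
        (homotopic_append_dropLast_reverse hrev).symm.append u []
    _ = u ++ z :: t ++ l' := by simp [← ht]
    Homotopic G _ ([a] ++ l') := hloop.append [] l'

end TriSimplyConnected

end SimplyConnected

section ConeContraction

variable {V : Type*} {G : SimpleGraph V}

theorem cliqueGraph_homotopic_of_forall_mem {x : V} :
    ∀ {Q Z : CliqueVert G} {W : List (CliqueVert G)}, (Q :: W).IsChain (cliqueGraph G).Adj →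
      (∀ R ∈ Q :: W, x ∈ R.1) → (Q :: W).getLast? = some Z →
      Homotopic (cliqueGraph G) (Q :: W) (if Q = Z then [Q] else [Q, Z])
  | Q, Z, [], _, _, hZ => by
    obtain rfl : Q = Z := by simpa using hZ
    simpa using Homotopic.refl _
  | Q, Z, S :: W, hc, hx, hZ => by
    have hQS := (List.isChain_cons_cons.mp hc).1
    have hadj {R R' : CliqueVert G} (hR : R ∈ Q :: S :: W) (hR' : R' ∈ Q :: S :: W)
        (hne : R ≠ R') : (cliqueGraph G).Adj R R' := ⟨hne, x, hx R hR, hx R' hR'⟩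
    have hZmem : Z ∈ Q :: S :: W := List.mem_of_getLast? hZ
    have ih : Homotopic (cliqueGraph G) (Q :: S :: W) (Q :: if S = Z then [S] else [S, Z]) := by
      simpa using (cliqueGraph_homotopic_of_forall_mem (Z := Z) hc.tail
        (fun R hR => hx R (.tail _ hR)) (by simpa using hZ)).append [Q] []
    by_cases hSZ : S = Z
    · subst hSZ
      simpa [hQS.ne] using ih
    · refine (if_neg hSZ ▸ ih).trans (.of_elemMove ?_)
      by_cases hQZ : Q = Z
      · subst hQZ
        simpa using ElemMove.deadEndRemove [] [] Q S hQS
      · simpa [hQZ] using ElemMove.triRemove [] [] Q S Z hQS (hadj (by simp) hZmem hSZ)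
          (hadj (by simp) hZmem hQZ)

end ConeContraction

section CliqueCover

variable {V' V : Type*} {G' : SimpleGraph V'} {G : SimpleGraph V} {p : G' →g G}

namespace IsTriangularCover

lemma mem_closedNbhd_of_map (hp : IsTriangularCover p) {v a b : V'} (ha : a ∈ closedNbhd G' v)
    (hb : b ∈ closedNbhd G' v) (h : p b ∈ closedNbhd G (p a)) : b ∈ closedNbhd G' a := by
  rcases h with h | h
  · rw [hp.injOn v hb ha h]; exact self_mem_closedNbhd a
  · exact mem_closedNbhd_of_adj (hp.reflectAdj v a b ha hb h)

lemma isClique_closedNbhd_inter_preimage (hp : IsTriangularCover p) (v : V') {t : Set V}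
    (ht : G.IsClique t) : G'.IsClique (closedNbhd G' v ∩ p ⁻¹' t) := by
  rintro x ⟨hxN, hxt⟩ y ⟨hyN, hyt⟩ hne
  exact hp.reflectAdj v x y hxN hyN (ht hxt hyt fun h => hne (hp.injOn v hxN hyN h))

lemma image_closedNbhd_inter_preimage (hp : IsTriangularCover p) {v : V'} {t : Set V}
    (ht : t ⊆ closedNbhd G (p v)) : p '' (closedNbhd G' v ∩ p ⁻¹' t) = t := by
  rw [Set.image_inter_preimage]
  exact Set.inter_eq_right.mpr (ht.trans (hp.surjOn v))

lemma isMaxClique_image (hp : IsTriangularCover p) {s : Set V'} (hs : IsMaxClique G' s) :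
    IsMaxClique G (p '' s) := by
  have : Nonempty V' := hp.connDom.nonempty
  obtain ⟨v, hv⟩ := hs.nonempty
  refine ⟨hs.1.image p, fun t ht hst => ?_⟩
  have htN : t ⊆ closedNbhd G (p v) := ht.subset_closedNbhd (hst ⟨v, hv, rfl⟩)
  have hs' : closedNbhd G' v ∩ p ⁻¹' t = s :=
    hs.2 _ (hp.isClique_closedNbhd_inter_preimage v ht)
      fun x hx => ⟨hs.1.subset_closedNbhd hv hx, hst ⟨x, hx, rfl⟩⟩
  rw [← hs', hp.image_closedNbhd_inter_preimage htN]

lemma exists_isMaxClique_image_eq (hp : IsTriangularCover p) {x : V'} {t : Set V}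
    (ht : IsMaxClique G t) (hxt : p x ∈ t) : ∃ s, IsMaxClique G' s ∧ x ∈ s ∧ p '' s = t := by
  have htN : t ⊆ closedNbhd G (p x) := ht.1.subset_closedNbhd hxt
  refine ⟨closedNbhd G' x ∩ p ⁻¹' t, ⟨hp.isClique_closedNbhd_inter_preimage x ht.1,
    fun u hu hsu => ?_⟩, ⟨self_mem_closedNbhd x, hxt⟩, hp.image_closedNbhd_inter_preimage htN⟩
  have hxu : x ∈ u := hsu ⟨self_mem_closedNbhd x, hxt⟩
  have hpu : p '' u = t := ht.2 _ (hu.image p) <| by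
      rw [← hp.image_closedNbhd_inter_preimage htN]; exact Set.image_mono hsu
  exact hsu.antisymm' fun a ha => ⟨hu.subset_closedNbhd hxu ha, hpu ▸ ⟨a, ha, rfl⟩⟩

lemma eq_of_image_eq (hp : IsTriangularCover p) {Q R : CliqueVert G'} {x : V'} (hxQ : x ∈ Q.1)
    (hxR : x ∈ R.1) (h : p '' Q.1 = p '' R.1) : Q = R :=
  Subtype.ext <| ((hp.injOn x).image_eq_image_iff (Q.2.1.subset_closedNbhd hxQ)
    (R.2.1.subset_closedNbhd hxR)).mp h

def cliqueHom (hp : IsTriangularCover p) : cliqueGraph G' →g cliqueGraph G where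
  toFun Q := ⟨p '' Q.1, hp.isMaxClique_image Q.2⟩
  map_rel' := by
    rintro Q R ⟨hne, x, hxQ, hxR⟩
    exact ⟨fun h => hne (hp.eq_of_image_eq hxQ hxR (congrArg Subtype.val h)), p x,
      ⟨x, hxQ, rfl⟩, ⟨x, hxR, rfl⟩⟩

theorem isTriangularCover_cliqueHom (hp : IsTriangularCover p) :
    IsTriangularCover hp.cliqueHom := by
  have : Nonempty V' := hp.connDom.nonempty
  refine ⟨cliqueGraph_connected hp.connDom, cliqueGraph_connected hp.connCod, ?_, ?_, ?_⟩
  · intro Q R hR S hS h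
    obtain ⟨x, hxQ, hxR⟩ := mem_closedNbhd_cliqueGraph.mp hR
    obtain ⟨y, hyQ, hyS⟩ := mem_closedNbhd_cliqueGraph.mp hS
    have himg : p '' R.1 = p '' S.1 := congrArg Subtype.val h
    obtain ⟨s, hsS, hs⟩ : p x ∈ p '' S.1 := himg ▸ ⟨x, hxR, rfl⟩
    have hsx : s = x := hp.injOn y (S.2.1.subset_closedNbhd hyS hsS)
      (Q.2.1.subset_closedNbhd hyQ hxQ) hs
    exact hp.eq_of_image_eq hxR (hsx ▸ hsS) himg
  · rintro Q T (rfl | ⟨-, _, ⟨x, hxQ, rfl⟩, hxT⟩)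
    · exact ⟨Q, self_mem_closedNbhd Q, rfl⟩
    · obtain ⟨s, hs, hxs, hsT⟩ := hp.exists_isMaxClique_image_eq T.2 hxT
      exact ⟨⟨s, hs⟩, mem_closedNbhd_cliqueGraph.mpr ⟨x, hxQ, hxs⟩, Subtype.ext hsT⟩
  · rintro Q R S hR hS ⟨hne, _, ⟨r, hrR, rfl⟩, ⟨s, hsS, hsr⟩⟩
    obtain ⟨x, hxQ, hxR⟩ := mem_closedNbhd_cliqueGraph.mp hR
    obtain ⟨y, hyQ, hyS⟩ := mem_closedNbhd_cliqueGraph.mp hS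
    have hrN : r ∈ closedNbhd G' y :=
      hp.mem_closedNbhd_of_map (Q.2.1.subset_closedNbhd hxQ hyQ) (R.2.1.subset_closedNbhd hxR hrR)
        ((S.2.1.image p).subset_closedNbhd ⟨y, hyS, rfl⟩ ⟨s, hsS, hsr⟩)
    have hsr' : s = r := hp.injOn y (S.2.1.subset_closedNbhd hyS hsS) hrN hsr
    exact ⟨fun hRS => hne (hRS ▸ rfl), r, hrR, hsr' ▸ hsS⟩

end IsTriangularCover

end CliqueCover

section Lifting

variable {VB VK : Type*} {HB : SimpleGraph VB} {HK : SimpleGraph VK} {q : HB →g HK}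

/-- The default value `b` is junk, taken only when `k ∉ closedNbhd HK (q b)`. -/
noncomputable def liftStep (q : HB →g HK) (b : VB) (k : VK) : VB :=
  open Classical in if h : ∃ x ∈ closedNbhd HB b, q x = k then h.choose else b

noncomputable def liftEnd (q : HB →g HK) (b : VB) (l : List VK) : VB := l.foldl (liftStep q) b

lemma liftEnd_cons (b : VB) (k : VK) (l : List VK) :
    liftEnd q b (k :: l) = liftEnd q (liftStep q b k) l := rfl

lemma liftEnd_append (b : VB) (l l' : List VK) :
    liftEnd q b (l ++ l') = liftEnd q (liftEnd q b l) l' :=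
  List.foldl_append

namespace IsTriangularCover

lemma liftStep_spec (hq : IsTriangularCover q) {b : VB} {k : VK}
    (hk : k ∈ closedNbhd HK (q b)) :
    liftStep q b k ∈ closedNbhd HB b ∧ q (liftStep q b k) = k := by
  have h : ∃ x ∈ closedNbhd HB b, q x = k := hq.surjOn b hk
  rw [liftStep, dif_pos h]
  exact h.choose_spec

lemma liftStep_eq (hq : IsTriangularCover q) {b x : VB} (hx : x ∈ closedNbhd HB b) :
    liftStep q b (q x) = x := by
  have hk : q x ∈ closedNbhd HK (q b) := by
    rcases hx with rfl | h
    · exact self_mem_closedNbhd _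
    · exact mem_closedNbhd_of_adj (q.map_rel h)
  exact hq.injOn b (hq.liftStep_spec hk).1 hx (hq.liftStep_spec hk).2

lemma liftStep_self (hq : IsTriangularCover q) (b : VB) : liftStep q b (q b) = b :=
  hq.liftStep_eq (self_mem_closedNbhd b)

lemma adj_liftStep (hq : IsTriangularCover q) {b : VB} {k : VK} (h : HK.Adj (q b) k) :
    HB.Adj b (liftStep q b k) := by
  obtain ⟨hmem, hval⟩ := hq.liftStep_spec (mem_closedNbhd_of_adj h)
  rcases hmem with heq | hadj
  · rw [heq] at hval
    exact absurd hval h.ne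
  · exact hadj

/-- With `d = q b` this also covers dead ends. -/
lemma liftStep_liftStep (hq : IsTriangularCover q) {b : VB} {c d : VK} (hc : HK.Adj (q b) c)
    (hd : d ∈ closedNbhd HK (q b)) (hcd : HK.Adj c d) :
    liftStep q (liftStep q b c) d = liftStep q b d := by
  have hbc := hq.adj_liftStep hc
  obtain ⟨hc₁, hqc₁⟩ := hq.liftStep_spec (mem_closedNbhd_of_adj hc)
  obtain ⟨hd₁, hqd₁⟩ := hq.liftStep_spec (k := d) (hqc₁ ▸ mem_closedNbhd_of_adj hcd)
  have h := hq.mem_closedNbhd_of_map (mem_closedNbhd_of_adj hbc.symm) hd₁ (by rw [hqd₁]; exact hd)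
  rw [← hq.liftStep_eq h, hqd₁]

lemma getLast?_cons_eq_map_liftEnd (hq : IsTriangularCover q) :
    ∀ {b : VB} {l : List VK}, (q b :: l).IsChain HK.Adj →
      (q b :: l).getLast? = some (q (liftEnd q b l))
  | _, [], _ => rfl
  | b, k :: l, hc => by
    have hk := (hq.liftStep_spec (mem_closedNbhd_of_adj (List.isChain_cons_cons.mp hc).1)).2
    rw [List.getLast?_cons_cons, liftEnd_cons,
      ← hq.getLast?_cons_eq_map_liftEnd (b := liftStep q b k) (by rw [hk]; exact hc.tail), hk]

lemma getLast?_eq_map_liftEnd (hq : IsTriangularCover q) {b : VB} {l : List VK}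
    (hc : l.IsChain HK.Adj) (hb : l.head? = some (q b)) :
    l.getLast? = some (q (liftEnd q b l)) := by
  obtain ⟨l, rfl⟩ := List.head?_eq_some_iff.mp hb
  rw [liftEnd_cons, hq.liftStep_self]
  exact hq.getLast?_cons_eq_map_liftEnd hc

lemma liftEnd_append_cons_congr (hq : IsTriangularCover q) {b : VB} {a : VK}
    {l₁ r r' : List VK} (hc : (l₁ ++ a :: r).IsChain HK.Adj)
    (hb : (l₁ ++ a :: r).head? = some (q b))
    (h : ∀ b₁, q b₁ = a → liftEnd q b₁ r = liftEnd q b₁ r') :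
    liftEnd q b (l₁ ++ a :: r) = liftEnd q b (l₁ ++ a :: r') := by
  have e (r : List VK) : l₁ ++ a :: r = l₁ ++ [a] ++ r := by simp
  rw [e r, e r', liftEnd_append _ _ r, liftEnd_append _ _ r']
  refine h _ (Option.some_injective _ ?_)
  rw [← hq.getLast?_eq_map_liftEnd (hc.prefix ⟨r, (e r).symm⟩) (by rw [← hb]; cases l₁ <;> rfl)]
  simp

theorem liftEnd_eq_of_elemMove (hq : IsTriangularCover q) {b : VB} {u u' : List VK}
    (h : ElemMove HK u u') (hc : u.IsChain HK.Adj) (hb : u.head? = some (q b)) :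
    liftEnd q b u = liftEnd q b u' := by
  cases h with
  | triRemove l₁ l₂ a c d h₁ h₂ h₃ | triInsert l₁ l₂ a c d h₁ h₂ h₃ =>
    refine hq.liftEnd_append_cons_congr hc hb fun b₁ hb₁ => ?_
    subst hb₁
    simp only [liftEnd_cons, hq.liftStep_liftStep h₁ (mem_closedNbhd_of_adj h₃) h₂]
  | deadEndRemove l₁ l₂ a c h | deadEndInsert l₁ l₂ a c h =>
    refine hq.liftEnd_append_cons_congr hc hb fun b₁ hb₁ => ?_
    subst hb₁
    simp only [liftEnd_cons, hq.liftStep_liftStep h (self_mem_closedNbhd _) h.symm,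
      hq.liftStep_self]

theorem liftEnd_eq_of_homotopic (hq : IsTriangularCover q) {b : VB} {u u' : List VK}
    (h : Homotopic HK u u') (hc : u.IsChain HK.Adj) (hb : u.head? = some (q b)) :
    liftEnd q b u = liftEnd q b u' := by
  induction h with
  | refl => rfl
  | tail hm hmove ih =>
    exact ih.trans (hq.liftEnd_eq_of_elemMove hmove (Homotopic.isChain hm hc)
      (Homotopic.head?_eq hm ▸ hb))

theorem surjective (hq : IsTriangularCover q) : Function.Surjective q := by
  obtain ⟨b₀⟩ := hq.connDom.nonempty
  have key {x y : VK} (w : HK.Walk x y) : x ∈ Set.range q → y ∈ Set.range q := by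
    induction w with
    | nil => exact id
    | cons hadj _ ih =>
      rintro ⟨b, rfl⟩
      exact ih ⟨_, (hq.liftStep_spec (mem_closedNbhd_of_adj hadj)).2⟩
  exact fun k => key (hq.connCod.preconnected (q b₀) k).some ⟨b₀, rfl⟩

end IsTriangularCover

end Lifting

section Uniqueness

variable {VA VB VC VK : Type*} {HA : SimpleGraph VA} {HB : SimpleGraph VB}
  {HC : SimpleGraph VC} {HK : SimpleGraph VK} {q : HB →g HK}

lemma SimpleGraph.Walk.getLast?_support {u v : VA} (w : HA.Walk u v) :
    w.support.getLast? = some v := by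
  rw [List.getLast?_eq_some_getLast w.support_ne_nil, w.getLast_support]

namespace IsTriangularCover

theorem hom_eq_of_comp_eq (hq : IsTriangularCover q) (hC : HC.Preconnected) {f g : HC →g HB}
    (h : q.comp f = q.comp g) {c₀ : VC} (h₀ : f c₀ = g c₀) : f = g := by
  have key {x y : VC} (w : HC.Walk x y) : f x = g x → f y = g y := by
    induction w with
    | nil => exact id
    | @cons x x' _ hadj _ ih =>
      refine fun hx => ih (hq.injOn (f x) (mem_closedNbhd_of_adj (f.map_rel hadj)) ?_ ?_)
      · exact hx ▸ mem_closedNbhd_of_adj (g.map_rel hadj)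
      · exact congrArg (· x') h
  exact RelHom.ext fun c => key (hC c₀ c).some h₀

theorem exists_lift (hq : IsTriangularCover q) (hsc : TriSimplyConnected HA) (φ : HA →g HK)
    {a₀ : VA} {b₀ : VB} (h₀ : q b₀ = φ a₀) : ∃ f : HA →g HB, q.comp f = φ ∧ f a₀ = b₀ := by
  let F (a : VA) : VB := liftEnd q b₀ ((hsc.1.preconnected a₀ a).some.support.map φ)
  have hchain {a : VA} (w : HA.Walk a₀ a) : (w.support.map φ).IsChain HK.Adj :=
    List.isChain_map_of_isChain φ (fun _ _ => φ.map_rel) w.isChain_adj_support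
  have hhead {a : VA} (w : HA.Walk a₀ a) : (w.support.map φ).head? = some (q b₀) := by
    rw [← w.cons_tail_support, h₀]; rfl
  have hF {a : VA} (w : HA.Walk a₀ a) : F a = liftEnd q b₀ (w.support.map φ) := by
    set w₀ := (hsc.1.preconnected a₀ a).some
    refine hq.liftEnd_eq_of_homotopic (Homotopic.map φ ?_) (hchain w₀) (hhead w₀)
    rw [← w₀.cons_tail_support, ← w.cons_tail_support]
    refine hsc.homotopic_of_getLast?_eq ?_ ?_ ?_ <;>
      simp only [SimpleGraph.Walk.cons_tail_support, SimpleGraph.Walk.isChain_adj_support,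
        SimpleGraph.Walk.getLast?_support]
  have hqF (a : VA) : q (F a) = φ a := by
    have := hq.getLast?_eq_map_liftEnd (hchain _) (hhead (hsc.1.preconnected a₀ a).some)
    rw [List.getLast?_map, SimpleGraph.Walk.getLast?_support] at this
    exact (Option.some_injective _ this).symm
  refine ⟨⟨F, fun {a a'} h => ?_⟩, RelHom.ext hqF, ?_⟩
  · set w := (hsc.1.preconnected a₀ a).some
    rw [hF (w.concat h), SimpleGraph.Walk.support_concat, List.map_append, liftEnd_append, ← hF w]
    exact hq.adj_liftStep ((hqF a).symm ▸ φ.map_rel h)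
  · change F a₀ = b₀
    rw [hF SimpleGraph.Walk.nil]
    exact (congrArg _ h₀.symm).trans (hq.liftStep_self b₀)

theorem nonempty_iso {p : HA →g HK} (hp : IsTriangularCover p) (hq : IsTriangularCover q)
    (hpsc : TriSimplyConnected HA) (hqsc : TriSimplyConnected HB) : Nonempty (HA ≃g HB) := by
  obtain ⟨a₀⟩ := hp.connDom.nonempty
  obtain ⟨b₀, hb₀⟩ := hq.surjective (p a₀)
  obtain ⟨f, hf, hfa⟩ := hq.exists_lift hpsc p hb₀
  obtain ⟨g, hg, hgb⟩ := hp.exists_lift hqsc q hb₀.symm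
  have hf' (a : VA) : q (f a) = p a := DFunLike.congr_fun hf a
  have hg' (b : VB) : p (g b) = q b := DFunLike.congr_fun hg b
  have hgf : g.comp f = .id := hp.hom_eq_of_comp_eq hp.connDom.preconnected (c₀ := a₀)
    (RelHom.ext fun a => by simp [hf', hg']) (by simp [hfa, hgb])
  have hfg : f.comp g = .id := hq.hom_eq_of_comp_eq hq.connDom.preconnected (c₀ := b₀)
    (RelHom.ext fun b => by simp [hf', hg']) (by simp [hfa, hgb])
  have hgf' (a : VA) : g (f a) = a := DFunLike.congr_fun hgf a
  refine ⟨⟨⟨f, g, hgf', fun b => DFunLike.congr_fun hfg b⟩, fun {a a'} => ⟨fun h => ?_, f.map_rel⟩⟩⟩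
  simpa only [hgf'] using g.map_rel (a := f a) (b := f a') h

end IsTriangularCover

end Uniqueness

section CliqueGraphSimplyConnected

variable {V : Type*} {G : SimpleGraph V}

/-- `LiesOver G s W`: the walk `W` of `kG` follows the walk `s` of `G` along a staircase, each
step either moving the vertex along an edge inside the current clique or moving the clique to
another one containing the current vertex. -/
inductive LiesOver (G : SimpleGraph V) : List V → List (CliqueVert G) → Prop
  | single {x : V} {R : CliqueVert G} : x ∈ R.1 → LiesOver G [x] [R]
  | consVert {x y : V} {R : CliqueVert G} {s : List V} {W : List (CliqueVert G)} :
      G.Adj x y → x ∈ R.1 → LiesOver G (y :: s) (R :: W) → LiesOver G (x :: y :: s) (R :: W)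
  | consClique {x : V} {R S : CliqueVert G} {s : List V} {W : List (CliqueVert G)} :
      x ∈ R.1 → LiesOver G (x :: s) (S :: W) → LiesOver G (x :: s) (R :: S :: W)

namespace LiesOver

lemma head_mem {x : V} {s : List V} {R : CliqueVert G} {W : List (CliqueVert G)}
    (h : LiesOver G (x :: s) (R :: W)) : x ∈ R.1 := by
  cases h <;> assumption

lemma exists_cons {s : List V} {W : List (CliqueVert G)} (h : LiesOver G s W) :
    ∃ R W', W = R :: W' := by
  cases h <;> exact ⟨_, _, rfl⟩

lemma isChain {s : List V} {W : List (CliqueVert G)} (h : LiesOver G s W) :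
    s.IsChain G.Adj := by
  induction h with
  | single => exact .singleton _
  | consVert hxy _ _ ih => exact ih.cons_cons hxy
  | consClique _ _ ih => exact ih

lemma forall_mem_of_singleton {x : V} {W : List (CliqueVert G)} (h : LiesOver G [x] W) :
    ∀ R ∈ W, x ∈ R.1 := by
  generalize hs : [x] = s at h
  induction h with
  | single hx => cases hs; simpa using hx
  | consVert => simp at hs
  | consClique hx _ ih =>
    cases hs
    simpa [hx] using ih rfl

lemma append_run {x : V} {s : List V} {run W : List (CliqueVert G)} (hrun : ∀ T ∈ run, x ∈ T.1)
    (h : LiesOver G (x :: s) W) : LiesOver G (x :: s) (run ++ W) := by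
  induction run with
  | nil => exact h
  | cons T run ih =>
    have ih := ih fun T' hT' => hrun T' (.tail _ hT')
    obtain ⟨S, W', hW'⟩ := ih.exists_cons
    rw [List.cons_append, hW']
    exact .consClique (hrun T (.head _)) (hW' ▸ ih)

lemma exists_run {x y : V} {s : List V} {W : List (CliqueVert G)}
    (h : LiesOver G (x :: y :: s) W) :
    ∃ run P rest, W = run ++ P :: rest ∧ (∀ T ∈ run, x ∈ T.1) ∧ x ∈ P.1 ∧ G.Adj x y ∧
      LiesOver G (y :: s) (P :: rest) := by
  generalize hs : x :: y :: s = s' at h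
  induction h with
  | single => simp at hs
  | consVert hxy hx h' =>
    obtain ⟨rfl, rfl, rfl⟩ := by simpa using hs
    exact ⟨[], _, _, rfl, by simp, hx, hxy, h'⟩
  | consClique hx _ ih =>
    obtain rfl := (List.cons.inj hs).1.symm
    obtain ⟨run, P, rest, hW, hrun, hxP, hxy, h'⟩ := ih hs
    exact ⟨_ :: run, P, rest, by rw [hW, List.cons_append], by simpa [hx] using hrun, hxP, hxy, h'⟩

lemma exists_homotopic_shortcut {x y : V} {s : List V} {Q : CliqueVert G}
    {W : List (CliqueVert G)} (h : LiesOver G (x :: y :: s) (Q :: W))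
    (hc : (Q :: W).IsChain (cliqueGraph G).Adj) :
    ∃ P rest, x ∈ P.1 ∧ G.Adj x y ∧ LiesOver G (y :: s) (P :: rest) ∧
      Homotopic (cliqueGraph G) (Q :: W) ((if Q = P then [Q] else [Q, P]) ++ rest) := by
  obtain ⟨run, P, rest, hW, hrun, hxP, hxy, h'⟩ := h.exists_run
  refine ⟨P, rest, hxP, hxy, h', ?_⟩
  have hseg : Q :: W = run ++ [P] ++ rest := by simp [hW]
  obtain ⟨W₀, hW₀⟩ : ∃ W₀, run ++ [P] = Q :: W₀ :=
    List.head?_eq_some_iff.mp (by cases run <;> simp_all)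
  rw [hseg, hW₀] at hc ⊢
  refine (cliqueGraph_homotopic_of_forall_mem (x := x) hc.left_of_append ?_ ?_).append [] rest
  · rw [← hW₀]
    simpa [or_imp, forall_and, hxP] using hrun
  · rw [← hW₀]
    simp

lemma exists_cons_of_mem {x y : V} {s : List V} {R : CliqueVert G}
    {W : List (CliqueVert G)} (hx : x ∈ R.1) (h : LiesOver G (y :: s) (R :: W)) :
    ∃ s', LiesOver G (x :: s') (R :: W) ∧ (x :: s').getLast? = (y :: s).getLast? := by
  by_cases hxy : x = y
  · exact ⟨s, hxy ▸ h, by rw [hxy]⟩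
  · exact ⟨y :: s, .consVert (R.2.1 hx h.head_mem hxy) hx h, by simp⟩

end LiesOver

def TransportsOver (G : SimpleGraph V) (s s' : List V) : Prop :=
  ∀ W, W.IsChain (cliqueGraph G).Adj → LiesOver G s W →
    ∃ W', LiesOver G s' W' ∧ Homotopic (cliqueGraph G) W W'

namespace TransportsOver

lemma of_cons_cons {x y : V} {s t : List V}
    (h : ∀ P rest, (P :: rest).IsChain (cliqueGraph G).Adj → x ∈ P.1 → G.Adj x y →
      LiesOver G (y :: s) (P :: rest) →
      ∃ W', LiesOver G (x :: t) W' ∧ Homotopic (cliqueGraph G) (P :: rest) W') :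
    TransportsOver G (x :: y :: s) (x :: t) := by
  intro W hc hW
  obtain ⟨run, P, rest, rfl, hrun, hxP, hxy, h'⟩ := hW.exists_run
  obtain ⟨W', hW', hhom⟩ := h P rest hc.right_of_append hxP hxy h'
  exact ⟨run ++ W', hW'.append_run hrun, by simpa using hhom.append run []⟩

lemma append_left {a : V} {t t' : List V} (h : TransportsOver G (a :: t) (a :: t')) :
    ∀ l, TransportsOver G (l ++ a :: t) (l ++ a :: t')
  | [] => h
  | z :: l => by
    obtain ⟨y, l₀, hl⟩ := List.exists_cons_of_ne_nil (List.concat_ne_nil a l)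
    have e (r : List V) : l ++ a :: r = y :: (l₀ ++ r) := by
      rw [← List.cons_append, ← hl, List.append_assoc, List.singleton_append]
    simp only [List.cons_append, e]
    refine of_cons_cons fun P rest hc hzP hzy hW => ?_
    obtain ⟨W', hW', hhom⟩ := append_left h l (P :: rest) hc (e t ▸ hW)
    obtain ⟨rest', rfl⟩ := List.head?_eq_some_iff.mp hhom.head?_eq.symm
    exact ⟨P :: rest', .consVert hzy hzP (e t' ▸ hW'), hhom⟩

lemma deadEndInsert {a b : V} (h : G.Adj a b) (l : List V) :
    TransportsOver G (a :: l) (a :: b :: a :: l) := by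
  intro W _ hW
  obtain ⟨R, W₂, rfl⟩ := hW.exists_cons
  have haR := hW.head_mem
  obtain ⟨T, haT, hbT⟩ := exists_cliqueVert_mem_mem h
  by_cases hTR : T = R
  · subst hTR
    exact ⟨T :: W₂, .consVert h haR (.consVert h.symm hbT hW), .refl _⟩
  · refine ⟨R :: T :: R :: W₂,
      .consClique haR (.consVert h haT (.consVert h.symm hbT (.consClique haT hW))),
      .of_elemMove ?_⟩
    simpa using
      ElemMove.deadEndInsert (G := cliqueGraph G) [] W₂ R T ⟨Ne.symm hTR, a, haR, haT⟩

lemma deadEndRemove {a b : V} (l : List V) : TransportsOver G (a :: b :: a :: l) (a :: l) := by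
  refine of_cons_cons fun P rest hc haP _ hW => ?_
  obtain ⟨P₂, rest₂, -, -, hW₂, hhom⟩ := hW.exists_homotopic_shortcut hc
  by_cases hPP : P = P₂
  · subst hPP
    exact ⟨P :: rest₂, hW₂, by simpa using hhom⟩
  · exact ⟨P :: P₂ :: rest₂, .consClique haP hW₂, by simpa [hPP] using hhom⟩

lemma triInsert {a b c : V} (h₁ : G.Adj a b) (h₂ : G.Adj b c) (h₃ : G.Adj a c) (l : List V) :
    TransportsOver G (a :: c :: l) (a :: b :: c :: l) := by
  refine of_cons_cons fun P rest _ haP _ hW => ?_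
  obtain ⟨D, haD, hbD, hcD⟩ := exists_cliqueVert_mem_mem_mem h₁ h₂ h₃
  by_cases hDP : D = P
  · subst hDP
    exact ⟨D :: rest, .consVert h₁ haD (.consVert h₂ hbD hW), .refl _⟩
  · refine ⟨P :: D :: P :: rest,
      .consClique haP (.consVert h₁ haD (.consVert h₂ hbD (.consClique hcD hW))),
      .of_elemMove ?_⟩
    simpa using
      ElemMove.deadEndInsert (G := cliqueGraph G) [] rest P D ⟨Ne.symm hDP, a, haP, haD⟩

lemma triRemove {a b c : V} (h₃ : G.Adj a c) (l : List V) :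
    TransportsOver G (a :: b :: c :: l) (a :: c :: l) := by
  refine of_cons_cons fun P rest hc haP _ hW => ?_
  have hbP := hW.head_mem
  obtain ⟨P₂, rest₂, hbP₂, -, hW₂, hhom⟩ := hW.exists_homotopic_shortcut hc
  have hcP₂ := hW₂.head_mem
  by_cases hPP : P = P₂
  · subst hPP
    exact ⟨P :: rest₂, .consVert h₃ haP hW₂, by simpa using hhom⟩
  rw [if_neg hPP] at hhom
  by_cases hcP : c ∈ P.1
  · exact ⟨P :: P₂ :: rest₂, .consVert h₃ haP (.consClique hcP hW₂), hhom⟩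
  by_cases haP₂ : a ∈ P₂.1
  · exact ⟨P :: P₂ :: rest₂, .consClique haP (.consVert h₃ haP₂ hW₂), hhom⟩
  -- a clique through the edge `ac` fills the triangle `P, T, P₂` of `kG`
  obtain ⟨T, haT, hcT⟩ := exists_cliqueVert_mem_mem h₃
  refine ⟨P :: T :: P₂ :: rest₂, .consClique haP (.consVert h₃ haT (.consClique hcT hW₂)),
    hhom.trans (.of_elemMove ?_)⟩
  simpa using ElemMove.triInsert (G := cliqueGraph G) [] rest₂ P T P₂
    ⟨fun h => hcP (h ▸ hcT), a, haP, haT⟩ ⟨fun h => haP₂ (h ▸ haT), c, hcT, hcP₂⟩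
    ⟨hPP, b, hbP, hbP₂⟩

lemma of_elemMove {s s' : List V} (h : ElemMove G s s') : TransportsOver G s s' := by
  cases h with
  | triRemove l₁ l₂ a b c _ _ h₃ => exact (triRemove h₃ l₂).append_left l₁
  | triInsert l₁ l₂ a b c h₁ h₂ h₃ => exact (triInsert h₁ h₂ h₃ l₂).append_left l₁
  | deadEndRemove l₁ l₂ a b _ => exact (deadEndRemove l₂).append_left l₁
  | deadEndInsert l₁ l₂ a b h => exact (deadEndInsert h l₂).append_left l₁

lemma of_homotopic {s s' : List V} (h : Homotopic G s s') : TransportsOver G s s' := by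
  induction h with
  | refl => exact fun W _ hW => ⟨W, hW, .refl _⟩
  | tail _ hm ih =>
    intro W hc hW
    obtain ⟨W₁, hW₁, h₁⟩ := ih W hc hW
    obtain ⟨W₂, hW₂, h₂⟩ := of_elemMove hm W₁ (h₁.isChain hc) hW₁
    exact ⟨W₂, hW₂, h₁.trans h₂⟩

end TransportsOver

lemma exists_liesOver :
    ∀ {R Z : CliqueVert G} {L : List (CliqueVert G)} {y z : V},
      (R :: L).IsChain (cliqueGraph G).Adj → (R :: L).getLast? = some Z → y ∈ R.1 → z ∈ Z.1 →
      ∃ s, LiesOver G (y :: s) (R :: L) ∧ (y :: s).getLast? = some z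
  | R, Z, [], _, _, _, hZ, hy, hz => by
    obtain rfl : R = Z := by simpa using hZ
    simpa using LiesOver.exists_cons_of_mem hy (.single hz)
  | R, Z, S :: L, _, _, hc, hZ, hy, hz => by
    obtain ⟨y', hy'R, hy'S⟩ := (List.isChain_cons_cons.mp hc).1.2
    obtain ⟨s, hs, hlast⟩ := exists_liesOver hc.tail (by simpa using hZ) hy'S hz
    obtain ⟨s', hs', hlast'⟩ := LiesOver.exists_cons_of_mem hy (.consClique hy'R hs)
    exact ⟨s', hs', hlast'.trans hlast⟩

theorem triSimplyConnected_cliqueGraph (hsc : TriSimplyConnected G) :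
    TriSimplyConnected (cliqueGraph G) := by
  refine ⟨cliqueGraph_connected hsc.1, fun R₀ L hc hlast => ?_⟩
  have : Nonempty V := hsc.1.nonempty
  obtain ⟨x, hx⟩ := R₀.2.nonempty
  replace hlast : (R₀ :: L).getLast? = some R₀ := by
    rw [List.getLast?_eq_some_getLast (List.cons_ne_nil _ _), hlast]
  obtain ⟨s, hs, hsx⟩ := exists_liesOver hc hlast hx hx
  obtain ⟨W, hW, hhom⟩ :=
    TransportsOver.of_homotopic (hsc.homotopic_singleton hs.isChain hsx) _ hc hs
  obtain ⟨W', rfl⟩ := List.head?_eq_some_iff.mp hhom.head?_eq.symm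
  have hcone := cliqueGraph_homotopic_of_forall_mem (hhom.isChain hc) hW.forall_mem_of_singleton
    (hhom.getLast?_eq ▸ hlast)
  rw [if_pos rfl] at hcone
  exact hhom.trans hcone

end CliqueGraphSimplyConnected

lemma SimpleGraph.Iso.apply_mem_closedNbhd_iff {V W : Type*} {G : SimpleGraph V}
    {H : SimpleGraph W} (e : G ≃g H) {v w : V} :
    e w ∈ closedNbhd H (e v) ↔ w ∈ closedNbhd G v := by
  simp only [mem_closedNbhd_iff, e.map_rel_iff, e.injective.eq_iff]

theorem IsTriangularCover.iso_comp {VB VK VK' : Type*} {HB : SimpleGraph VB}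
    {HK : SimpleGraph VK} {HK' : SimpleGraph VK'} {q : HB →g HK} (hq : IsTriangularCover q)
    (e : HK ≃g HK') : IsTriangularCover (e.toHom.comp q) where
  connDom := hq.connDom
  connCod := e.connected_iff.mp hq.connCod
  injOn v _ hx _ hy h := hq.injOn v hx hy (e.injective h)
  surjOn v y hy := by
    obtain ⟨x, hx, hxy⟩ := hq.surjOn v (e.apply_mem_closedNbhd_iff.mp (e.apply_symm_apply y ▸ hy))
    exact ⟨x, hx, (congrArg e hxy).trans (e.apply_symm_apply y)⟩
  reflectAdj v x y hx hy h := hq.reflectAdj v x y hx hy (e.map_rel_iff.mp h)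

theorem IsTriangularCover.exists_iterate_kStep {V' V : Type u} {G' : SimpleGraph V'}
    {G : SimpleGraph V} {p : G' →g G} (hp : IsTriangularCover p) (hsc : TriSimplyConnected G')
    (n : ℕ) : ∃ q : (kStep^[n] ⟨V', G'⟩).graph →g (kStep^[n] ⟨V, G⟩).graph,
      IsTriangularCover q ∧ TriSimplyConnected (kStep^[n] ⟨V', G'⟩).graph := by
  induction n with
  | zero => exact ⟨p, hp, hsc⟩
  | succ n ih =>
    obtain ⟨q, hq, hqsc⟩ := ih
    rw [Function.iterate_succ_apply', Function.iterate_succ_apply']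
    exact ⟨hq.cliqueHom, hq.isTriangularCover_cliqueHom, triSimplyConnected_cliqueGraph hqsc⟩

theorem universalCover_cliqueConvergent_general {V' V : Type u} {G' : SimpleGraph V'}
    {G : SimpleGraph V} (p : G' →g G) (hp : IsTriangularCover p)
    (hsc : TriSimplyConnected G')
    (hconv : CliqueConvergent G) : CliqueConvergent G' := by
  obtain ⟨n, m, hnm, ⟨e⟩⟩ := hconv
  obtain ⟨qn, hqn, hscn⟩ := hp.exists_iterate_kStep hsc n
  obtain ⟨qm, hqm, hscm⟩ := hp.exists_iterate_kStep hsc m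
  exact ⟨n, m, hnm, (hqn.iso_comp e).nonempty_iso hqm hscn hscm⟩

/-- If a connected graph is clique convergent, then so is its universal triangular cover. -/
theorem universalCover_cliqueConvergent {V' V : Type u} {G' : SimpleGraph V'}
    {G : SimpleGraph V} (p : G' →g G) (hp : IsTriangularCover p)
    (hsc : TriSimplyConnected G') (hG : G.Connected)
    (hconv : CliqueConvergent G) : CliqueConvergent G' :=
  universalCover_cliqueConvergent_general p hp hsc hconv
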